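/- Fix integers η ≥ 2 and ν ≥ 1 with η² ≤ 2π²ν, let f : ℤ/2ηℤ → ℂ, and let F : ℕ × ℤ/2ηℤ → ℂ be the solution of the explicit discrete heat scheme with initial condition f. If |f(j)| ≤ M for all j, for some real M ≥ 0, then |F(n,j)| ≤ M for all n ∈ ℕ and all j ∈ ℤ/2ηℤ. -/

import Mathlib

/-! Discrete maximum principle. The stability condition says exactly that the Courant number
`c = η²/(4π²ν)` is at most `1/2`, so each step of the scheme replaces `F(n,j)` by the convex
combination `(1 - 2c) F(n,j) + c F(n,j+2) + c F(n,j-2)`, which stays in any closed ball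
around `0` containing all values `F(n,·)`. -/

open Real

/-- The explicit discrete heat scheme on the grid of `2η` points, time step `1/ν`:
`F(0,j) = f(j)`,
`F(n+1,j) = F(n,j) + (η²/(4π²ν))·(F(n,j+2) − 2F(n,j) + F(n,j−2))`. -/
noncomputable def heatScheme (η ν : ℕ) (f : ZMod (2 * η) → ℂ) : ℕ → ZMod (2 * η) → ℂ
  | 0 => f
  | n + 1 => fun j =>
      heatScheme η ν f n j + ((η : ℂ) ^ 2 / (4 * (π : ℂ) ^ 2 * ν)) *
        (heatScheme η ν f n (j + 2) - 2 * heatScheme η ν f n j + heatScheme η ν f n (j - 2))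

/-- The Courant number of the scheme; it is `0` when `ν = 0`. -/
noncomputable def heatSchemeRatio (η ν : ℕ) : ℝ := (η : ℝ) ^ 2 / (4 * π ^ 2 * ν)

lemma heatSchemeRatio_nonneg (η ν : ℕ) : 0 ≤ heatSchemeRatio η ν := by
  unfold heatSchemeRatio; positivity

lemma two_mul_heatSchemeRatio_le_one {η ν : ℕ} (hstab : (η : ℝ) ^ 2 ≤ 2 * π ^ 2 * ν) :
    2 * heatSchemeRatio η ν ≤ 1 := by
  rcases (Nat.cast_nonneg ν : (0 : ℝ) ≤ ν).eq_or_lt with hν | hν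
  · simp [heatSchemeRatio, ← hν]
  · rw [heatSchemeRatio, mul_div_assoc', div_le_one (by positivity)]
    linarith

lemma heatScheme_succ_apply (η ν : ℕ) (f : ZMod (2 * η) → ℂ) (n : ℕ) (j : ZMod (2 * η)) :
    heatScheme η ν f (n + 1) j =
      (1 - 2 * heatSchemeRatio η ν) • heatScheme η ν f n j +
        heatSchemeRatio η ν • heatScheme η ν f n (j + 2) +
        heatSchemeRatio η ν • heatScheme η ν f n (j - 2) := by
  simp only [heatScheme, heatSchemeRatio, Complex.real_smul]
  push_cast
  ring

lemma norm_three_point_average_le {E : Type*} [SeminormedAddCommGroup E] [NormedSpace ℝ E]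
    {a b d : E} {c M : ℝ} (hc : 0 ≤ c) (hc2 : 2 * c ≤ 1)
    (ha : ‖a‖ ≤ M) (hb : ‖b‖ ≤ M) (hd : ‖d‖ ≤ M) :
    ‖(1 - 2 * c) • a + c • b + c • d‖ ≤ M :=
  calc ‖(1 - 2 * c) • a + c • b + c • d‖
      ≤ ‖(1 - 2 * c) • a‖ + ‖c • b‖ + ‖c • d‖ := norm_add₃_le
    _ = (1 - 2 * c) * ‖a‖ + c * ‖b‖ + c * ‖d‖ := by
      rw [norm_smul_of_nonneg (by linarith), norm_smul_of_nonneg hc, norm_smul_of_nonneg hc]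
    _ ≤ (1 - 2 * c) * M + c * M + c * M := by gcongr
    _ = M := by ring

theorem heatScheme_bounded_general (η ν : ℕ)
    (hstab : (η : ℝ) ^ 2 ≤ 2 * π ^ 2 * ν)
    (f : ZMod (2 * η) → ℂ) (M : ℝ)
    (hf : ∀ j : ZMod (2 * η), ‖f j‖ ≤ M) :
    ∀ (n : ℕ) (j : ZMod (2 * η)), ‖heatScheme η ν f n j‖ ≤ M := by
  intro n
  induction n with
  | zero => exact hf
  | succ n ih =>
    intro j
    rw [heatScheme_succ_apply]
    exact norm_three_point_average_le (heatSchemeRatio_nonneg η ν)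
      (two_mul_heatSchemeRatio_le_one hstab) (ih j) (ih _) (ih _)

/-- Under the stability condition `η² ≤ 2π²ν`, the explicit discrete
heat scheme preserves the bound `|f| ≤ M`: `|F(n,j)| ≤ M` for all `n` and `j`. -/
theorem heatScheme_bounded (η ν : ℕ) (hη : 2 ≤ η) (hν : 1 ≤ ν)
    (hstab : (η : ℝ) ^ 2 ≤ 2 * π ^ 2 * ν)
    (f : ZMod (2 * η) → ℂ) (M : ℝ) (hM : 0 ≤ M)
    (hf : ∀ j : ZMod (2 * η), ‖f j‖ ≤ M) :
    ∀ (n : ℕ) (j : ZMod (2 * η)), ‖heatScheme η ν f n j‖ ≤ M :=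
  heatScheme_bounded_general η ν hstab f M hf
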